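/- arXiv:2202.09809 — 2 statements merged into one kernel-verified Lean document; each statement's English description precedes it below -/
import Mathlib

section
/- Let G be a topological group, A a C*-algebra with a group homomorphism α : G → Aut(A) into *-automorphisms, M a unital C*-algebra, B ⊆ M a closed two-sided ideal, and β : G → Aut(M) a group homomorphism into *-automorphisms with β_g(B) ⊆ B for all g. Let (φ, u) and (ψ, v) be cocycle representations of (A, α) in (M, β). Suppose there is a sequence of isometries sₙ ∈ M such that: (a) lim_{n→∞} ‖sₙ·ψ(a) − φ(a)·sₙ‖ = 0 for all a ∈ A; (b) sₙ·ψ(a) − φ(a)·sₙ ∈ B for all a ∈ A and n ≥ 1; (c) lim_{n→∞} sup_{g∈K} ‖sₙ·v_g − u_g·β_g(sₙ)‖ = 0 for every compact set K ⊆ G; (d) sₙ·v_g − u_g·β_g(sₙ) ∈ B for all n ≥ 1 and g ∈ G; (e) s_{n+1}*·sₙ = 0 for all n ≥ 1. Suppose furthermore there are isometries r₁, r₂ ∈ M with β_g(rᵢ) = rᵢ for all g, r₁r₁* + r₂r₂* = 1, and such that r₁ and r₂ commute with ψ(a) for every a ∈ A and with v_g for every g ∈ G. Then (φ, u) ≍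 (ψ, v) ⊕ (φ, u), where the Cuntz sum is formed with r₁, r₂; that is, there is a norm-continuous path w : [1,∞) → U(M) such that lim_{t→∞} ‖(ψ⊕φ)(a) − w_t·φ(a)·w_t*‖ = 0 for all a ∈ A, (ψ⊕φ)(a) − w_t·φ(a)·w_t* ∈ B for all a and t, lim_{t→∞} sup_{g∈K} ‖(v⊕u)_g − w_t·u_g·β_g(w_t)*‖ = 0 for every compact K ⊆ G, and (v⊕u)_g − w_t·u_g·β_g(w_t)* ∈ B for all t and g. -/
/-!
Interpolating along quarter circles between consecutive members of the sequence `sₙ` gives a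
norm-continuous path of isometries `S_t` (consecutive ones have orthogonal ranges), which still
intertwines `(ψ, v)` and `(φ, u)` asymptotically and modulo `B`. For an isometry `S`, the element
`W = (r₁r₁* + r₂Sr₂*)S* + r₂(1 - SS*)` is a unitary, and since `r₁, r₂` commute with `ψ` and `v`,
the defect `(ψ ⊕ φ)(a) W - W φ(a)` is a combination of `Sψ(a) - φ(a)S` and its adjoint version
with coefficients of norm at most `3`; likewise for the cocycles. Hence `W_t = W(S_t)` is the
required path. Membership of adjoints in `B` uses that a closed ideal of a C*-algebra is
self-adjoint.
-/

open Filter Topology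

theorem mul_mul_eq_mul_of_mul_eq {R : Type*} [Semigroup R] {a b c : R} (h : a * b = c) (x : R) :
    a * (b * x) = c * x := by
  rw [← mul_assoc, h]

section CuntzPair

variable {R : Type*} [Ring R] [StarRing R]

/-- Two isometries generating a unital copy of the Cuntz algebra `𝒪₂`. -/
structure IsCuntzPair (r₁ r₂ : R) : Prop where
  star_mul_self_left : star r₁ * r₁ = 1
  star_mul_self_right : star r₂ * r₂ = 1
  mul_star_add_mul_star : r₁ * star r₁ + r₂ * star r₂ = 1

def absorptionUnitary (r₁ r₂ S : R) : R :=
  (r₁ * star r₁ + r₂ * S * star r₂) * star S + r₂ * (1 - S * star S)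

theorem map_absorptionUnitary {R' F : Type*} [Ring R'] [StarRing R'] [FunLike F R R']
    [RingHomClass F R R'] [StarHomClass F R R'] (f : F) (r₁ r₂ S : R) :
    f (absorptionUnitary r₁ r₂ S) = absorptionUnitary (f r₁) (f r₂) (f S) := by
  simp only [absorptionUnitary, map_add, map_mul, map_sub, map_one, map_star]

theorem star_map_mul_map_eq_one {R' F : Type*} [Ring R'] [StarRing R'] [FunLike F R R']
    [RingHomClass F R R'] [StarHomClass F R R'] (f : F) {x : R} (h : star x * x = 1) :
    star (f x) * f x = 1 := by
  rw [← map_star, ← map_mul, h, map_one]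

namespace IsCuntzPair

variable {r₁ r₂ : R}

theorem symm (hr : IsCuntzPair r₁ r₂) : IsCuntzPair r₂ r₁ :=
  ⟨hr.star_mul_self_right, hr.star_mul_self_left, by rw [add_comm, hr.mul_star_add_mul_star]⟩

theorem star_left_mul_right (hr : IsCuntzPair r₁ r₂) : star r₁ * r₂ = 0 := by
  have h : star r₁ * r₂ = star r₁ * r₂ + star r₁ * r₂ :=
    calc star r₁ * r₂ = star r₁ * (r₁ * star r₁ + r₂ * star r₂) * r₂ := by
          rw [hr.mul_star_add_mul_star, mul_one]
      _ = star r₁ * r₁ * (star r₁ * r₂) + star r₁ * r₂ * (star r₂ * r₂) := by noncomm_ring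
      _ = star r₁ * r₂ + star r₁ * r₂ := by
          rw [hr.star_mul_self_left, hr.star_mul_self_right, one_mul, mul_one]
  simpa using h

theorem star_right_mul_left (hr : IsCuntzPair r₁ r₂) : star r₂ * r₁ = 0 :=
  hr.symm.star_left_mul_right

theorem commute_star_left (hr : IsCuntzPair r₁ r₂) {p : R} (h₁ : Commute p r₁)
    (h₂ : Commute p r₂) : Commute p (star r₁) :=
  calc p * star r₁ = star r₁ * r₁ * p * star r₁ + star r₁ * r₂ * p * star r₂ := by
        simp [hr.star_mul_self_left, hr.star_left_mul_right]
    _ = star r₁ * p * (r₁ * star r₁ + r₂ * star r₂) := by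
        rw [mul_assoc _ r₁, ← h₁.eq, mul_assoc _ r₂, ← h₂.eq]; noncomm_ring
    _ = star r₁ * p := by rw [hr.mul_star_add_mul_star, mul_one]

theorem commute_star_right (hr : IsCuntzPair r₁ r₂) {p : R} (h₁ : Commute p r₁)
    (h₂ : Commute p r₂) : Commute p (star r₂) :=
  hr.symm.commute_star_left h₂ h₁

theorem absorptionUnitary_mem_unitary (hr : IsCuntzPair r₁ r₂) {S : R} (hS : star S * S = 1) :
    absorptionUnitary r₁ r₂ S ∈ unitary R := by
  have e₁ := mul_mul_eq_mul_of_mul_eq hr.star_mul_self_left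
  have e₂ := mul_mul_eq_mul_of_mul_eq hr.star_mul_self_right
  have e₁₂ := mul_mul_eq_mul_of_mul_eq hr.star_left_mul_right
  have e₂₁ := mul_mul_eq_mul_of_mul_eq hr.star_right_mul_left
  have eS := mul_mul_eq_mul_of_mul_eq hS
  have hsum : S * (r₁ * (star r₁ * star S)) + S * (r₂ * (star r₂ * star S)) = S * star S := by
    rw [← mul_add, ← mul_assoc r₁, ← mul_assoc r₂, ← add_mul, hr.mul_star_add_mul_star, one_mul]
  rw [Unitary.mem_iff]
  constructor
  · simp only [absorptionUnitary, star_add, star_sub, star_mul, star_star, mul_add, add_mul,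
      mul_sub, sub_mul, mul_assoc, e₁, e₂, e₁₂, e₂₁, eS, hr.star_left_mul_right,
      hr.star_mul_self_right, mul_zero, zero_mul, mul_one, one_mul]
    rw [← hsum]
    abel
  · simp only [absorptionUnitary, star_add, star_sub, star_mul, star_star, mul_add, add_mul,
      mul_sub, sub_mul, mul_assoc, e₁, e₂, e₁₂, e₂₁, eS, mul_zero, zero_mul, mul_one, one_mul]
    rw [← hr.mul_star_add_mul_star]
    abel

/-- The defect of `absorptionUnitary` as an intertwiner from `q` to the Cuntz sum `p ⊕ q`,
through the defects `S p - q S'` and `p S'* - S* q` of `S, S'` as intertwiners from `p` to `q`. -/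
theorem cuntzSum_mul_absorptionUnitary_sub (hr : IsCuntzPair r₁ r₂) {p q S S' : R}
    (h₁ : Commute p r₁) (h₂ : Commute p r₂) :
    (r₁ * p * star r₁ + r₂ * q * star r₂) * absorptionUnitary r₁ r₂ S'
        - absorptionUnitary r₁ r₂ S * q
      = (r₁ * star r₁ + r₂ * S * (star r₂ - 1)) * (p * star S' - star S * q)
        + r₂ * (S * p - q * S') * ((1 - star r₂) * star S') := by
  have e₁ := mul_mul_eq_mul_of_mul_eq hr.star_mul_self_left
  have e₂ := mul_mul_eq_mul_of_mul_eq hr.star_mul_self_right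
  have e₁₂ := mul_mul_eq_mul_of_mul_eq hr.star_left_mul_right
  have e₂₁ := mul_mul_eq_mul_of_mul_eq hr.star_right_mul_left
  have h₁' := hr.commute_star_left h₁ h₂
  have h₂' := hr.commute_star_right h₁ h₂
  simp only [absorptionUnitary, mul_add, add_mul, mul_sub, sub_mul, mul_assoc, e₁, e₂, e₁₂, e₂₁,
    h₁.left_comm, h₂.left_comm, h₁'.left_comm, h₂'.left_comm, h₂.eq, h₁'.eq,
    hr.star_mul_self_right, mul_zero, zero_mul, mul_one, one_mul]
  abel

theorem cuntzSum_sub_conj_absorptionUnitary (hr : IsCuntzPair r₁ r₂) {p q S S' : R}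
    (h₁ : Commute p r₁) (h₂ : Commute p r₂) (hS' : star S' * S' = 1) :
    (r₁ * p * star r₁ + r₂ * q * star r₂)
        - absorptionUnitary r₁ r₂ S * q * star (absorptionUnitary r₁ r₂ S')
      = ((r₁ * star r₁ + r₂ * S * (star r₂ - 1)) * (p * star S' - star S * q)
        + r₂ * (S * p - q * S') * ((1 - star r₂) * star S'))
          * star (absorptionUnitary r₁ r₂ S') := by
  rw [← hr.cuntzSum_mul_absorptionUnitary_sub h₁ h₂, sub_mul, mul_assoc _ (absorptionUnitary _ _ _),
    Unitary.mul_star_self_of_mem (hr.absorptionUnitary_mem_unitary hS'), mul_one]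

theorem cuntzSum_sub_conj_absorptionUnitary_mem (hr : IsCuntzPair r₁ r₂) (B : TwoSidedIdeal R)
    {p q S S' : R} (h₁ : Commute p r₁) (h₂ : Commute p r₂) (hS' : star S' * S' = 1)
    (hD₁ : S * p - q * S' ∈ B) (hD₂ : p * star S' - star S * q ∈ B) :
    (r₁ * p * star r₁ + r₂ * q * star r₂)
      - absorptionUnitary r₁ r₂ S * q * star (absorptionUnitary r₁ r₂ S') ∈ B := by
  rw [hr.cuntzSum_sub_conj_absorptionUnitary h₁ h₂ hS']
  exact B.mul_mem_right _ _ (B.add_mem (B.mul_mem_left _ _ hD₂)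
    (B.mul_mem_right _ _ (B.mul_mem_left _ _ hD₁)))

end IsCuntzPair

end CuntzPair

theorem norm_le_one_of_star_mul_self_eq_one {M : Type*} [NormedRing M] [StarRing M] [CStarRing M]
    {x : M} (h : star x * x = 1) : ‖x‖ ≤ 1 := by
  have h₁ : ‖(1 : M)‖ * ‖(1 : M)‖ = ‖(1 : M)‖ := by
    rw [← CStarRing.norm_star_mul_self, star_one, one_mul]
  have h₁' : ‖(1 : M)‖ ≤ 1 := by nlinarith [norm_nonneg (1 : M)]
  have hx : ‖x‖ * ‖x‖ = ‖(1 : M)‖ := by rw [← CStarRing.norm_star_mul_self, h]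
  nlinarith [norm_nonneg x]

theorem IsCuntzPair.norm_cuntzSum_sub_conj_absorptionUnitary_le {M : Type*} [NormedRing M]
    [StarRing M] [CStarRing M] {r₁ r₂ p q S S' : M} (hr : IsCuntzPair r₁ r₂)
    (h₁ : Commute p r₁) (h₂ : Commute p r₂) (hS : star S * S = 1) (hS' : star S' * S' = 1) :
    ‖(r₁ * p * star r₁ + r₂ * q * star r₂)
        - absorptionUnitary r₁ r₂ S * q * star (absorptionUnitary r₁ r₂ S')‖
      ≤ 3 * ‖p * star S' - star S * q‖ + 2 * ‖S * p - q * S'‖ := by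
  have n₁ := norm_le_one_of_star_mul_self_eq_one hr.star_mul_self_left
  have n₂ := norm_le_one_of_star_mul_self_eq_one hr.star_mul_self_right
  have nS := norm_le_one_of_star_mul_self_eq_one hS
  have nS' := norm_le_one_of_star_mul_self_eq_one hS'
  have n1 := norm_le_one_of_star_mul_self_eq_one (x := (1 : M)) (by simp)
  have nW : ‖star (absorptionUnitary r₁ r₂ S')‖ ≤ 1 := by
    rw [norm_star]
    exact norm_le_one_of_star_mul_self_eq_one (hr.absorptionUnitary_mem_unitary hS').1
  have hA : ‖r₁ * star r₁ + r₂ * S * (star r₂ - 1)‖ ≤ 3 :=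
    calc _ ≤ ‖r₁‖ * ‖star r₁‖ + ‖r₂‖ * ‖S‖ * (‖star r₂‖ + ‖(1 : M)‖) := by
          refine (norm_add_le _ _).trans (add_le_add (norm_mul_le _ _) ?_)
          exact (norm_mul_le _ _).trans (mul_le_mul (norm_mul_le _ _) (norm_sub_le _ _)
            (norm_nonneg _) (by positivity))
      _ ≤ 1 * 1 + 1 * 1 * (1 + 1) := by rw [norm_star, norm_star]; gcongr
      _ = 3 := by norm_num
  have hC : ‖(1 - star r₂) * star S'‖ ≤ 2 :=
    calc _ ≤ (‖(1 : M)‖ + ‖star r₂‖) * ‖star S'‖ :=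
          (norm_mul_le _ _).trans (mul_le_mul_of_nonneg_right (norm_sub_le _ _) (norm_nonneg _))
      _ ≤ (1 + 1) * 1 := by rw [norm_star, norm_star]; gcongr
      _ = 2 := by norm_num
  rw [hr.cuntzSum_sub_conj_absorptionUnitary h₁ h₂ hS']
  calc _ ≤ (3 * ‖p * star S' - star S * q‖ + 1 * ‖S * p - q * S'‖ * 2) * 1 :=
        norm_mul_le_of_le (norm_add_le_of_le (norm_mul_le_of_le hA le_rfl)
          (norm_mul_le_of_le (norm_mul_le_of_le n₂ le_rfl) hC)) nW
    _ = 3 * ‖p * star S' - star S * q‖ + 2 * ‖S * p - q * S'‖ := by ring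

theorem norm_sq_star_sub_mul_cfc_le {M : Type*} [CStarAlgebra M] (x : M) {ε : ℝ} (hε : 0 < ε) :
    ‖star x - star x * x * cfc (fun l => (l + ε)⁻¹) (star x * x) * star x‖ ^ 2 ≤ ε / 4 := by
  set a := star x * x
  have hspec : ∀ l ∈ spectrum ℝ a, 0 ≤ l := spectrum_star_mul_self_nonneg
  have hf : ContinuousOn (fun l : ℝ => (l + ε)⁻¹) (spectrum ℝ a) :=
    ContinuousOn.inv₀ (by fun_prop) fun l hl => by linarith [hspec l hl]
  have hk : ContinuousOn (fun l : ℝ => ε * (l + ε)⁻¹) (spectrum ℝ a) := continuousOn_const.mul hf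
  set g := cfc (fun l => ε * (l + ε)⁻¹) a
  have h₁ : cfc (fun l => l * (l + ε)⁻¹) a = a * cfc (fun l => (l + ε)⁻¹) a := by
    rw [cfc_mul (fun l => l) _ a continuousOn_id hf, cfc_id' ℝ a]
  have h₂ : 1 - cfc (fun l => l * (l + ε)⁻¹) a = g := by
    rw [← cfc_one ℝ a,
      ← cfc_sub 1 (fun l => l * (l + ε)⁻¹) a continuousOn_const (continuousOn_id.mul hf)]
    refine cfc_congr fun l hl => ?_
    have : l + ε ≠ 0 := by linarith [hspec l hl]
    rw [Pi.one_apply]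
    field_simp
    ring
  have hg : star x - a * cfc (fun l => (l + ε)⁻¹) a * star x = g * star x := by
    rw [← one_sub_mul, ← h₁, h₂]
  have hgg : g * star x * star (g * star x)
      = cfc (fun l => ε * (l + ε)⁻¹ * l * (ε * (l + ε)⁻¹)) a := by
    rw [cfc_mul (fun l => ε * (l + ε)⁻¹ * l) _ a (hk.mul continuousOn_id) hk,
      cfc_mul (fun l => ε * (l + ε)⁻¹) (fun l => l) a hk continuousOn_id, cfc_id' ℝ a,
      star_mul, star_star, (IsSelfAdjoint.cfc).star_eq]
    simp only [g, a, mul_assoc]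
  rw [hg, sq, ← CStarRing.norm_self_mul_star, hgg]
  refine norm_cfc_le (by positivity) fun l hl => ?_
  have hl := hspec l hl
  have hlε : 0 < l + ε := by linarith
  rw [Real.norm_eq_abs, abs_of_nonneg (by positivity)]
  field_simp
  -- AM-GM: `4 l ε ≤ (l + ε) ^ 2`
  nlinarith [sq_nonneg (l - ε)]

theorem TwoSidedIdeal.star_mem_of_isClosed {M : Type*} [CStarAlgebra M] {B : TwoSidedIdeal M}
    (hB : IsClosed (B : Set M)) {x : M} (hx : x ∈ B) : star x ∈ B := by
  rw [← SetLike.mem_coe, ← hB.closure_eq, Metric.mem_closure_iff]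
  intro δ hδ
  set y := star x * x * cfc (fun l => (l + δ ^ 2)⁻¹) (star x * x) * star x
  refine ⟨y, B.mul_mem_right _ _ (B.mul_mem_right _ _ (B.mul_mem_left (star x) x hx)), ?_⟩
  have h := norm_sq_star_sub_mul_cfc_le x (pow_pos hδ 2)
  rw [dist_eq_norm]
  nlinarith [norm_nonneg (star x - y)]

theorem tendstoUniformlyOn_zero_iff_tendsto {ι α β : Type*} [UniformSpace β] [Zero β]
    {F : ι → α → β} {p : Filter ι} {K : Set α} :
    TendstoUniformlyOn F 0 p K ↔ Tendsto (fun q : ι × α => F q.1 q.2) (p ×ˢ 𝓟 K) (𝓝 0) := by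
  rw [tendstoUniformlyOn_iff_tendsto, Uniform.tendsto_nhds_right]
  rfl

theorem continuous_comp_floor_fract {X : Type*} [TopologicalSpace X] {f : ℤ → ℝ → X}
    (hf : ∀ n, Continuous (f n)) (h : ∀ n, f n 1 = f (n + 1) 0) :
    Continuous fun t => f ⌊t⌋ (Int.fract t) := by
  have hIcc : ∀ n : ℤ, ContinuousOn (fun t => f ⌊t⌋ (Int.fract t)) (Set.Icc n (n + 1)) := by
    intro n
    refine ((hf n).comp (continuous_sub_right (n : ℝ))).continuousOn.congr fun t ht => ?_
    rcases ht.2.lt_or_eq with ht' | rfl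
    · have hfloor : ⌊t⌋ = n := Int.floor_eq_iff.mpr ⟨ht.1, ht'⟩
      simp [Int.fract, hfloor]
    · simpa using (h n).symm
  rw [continuous_iff_continuousAt]
  intro t
  have hcont := (hIcc (⌊t⌋ - 1)).union_of_isClosed (hIcc ⌊t⌋) isClosed_Icc isClosed_Icc
  push_cast at hcont
  rw [sub_add_cancel, Set.Icc_union_Icc_eq_Icc (by linarith) (by linarith)] at hcont
  exact hcont.continuousAt (Icc_mem_nhds (by linarith [Int.floor_le t]) (Int.lt_floor_add_one t))

section Interpolation

variable {E : Type*} [AddCommGroup E] [Module ℝ E]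

/-- Runs from `x n` to `x (n + 1)` along a quarter circle during `[n, n + 1]`; at negative times
`Int.toNat` clamps both indices to `0`. -/
noncomputable def interpolate (x : ℕ → E) (t : ℝ) : E :=
  Real.cos (Real.pi / 2 * Int.fract t) • x ⌊t⌋.toNat
    + Real.sin (Real.pi / 2 * Int.fract t) • x (⌊t⌋ + 1).toNat

theorem continuous_interpolate [TopologicalSpace E] [ContinuousAdd E] [ContinuousSMul ℝ E]
    (x : ℕ → E) : Continuous (interpolate x) :=
  continuous_comp_floor_fract (f := fun n τ => Real.cos (Real.pi / 2 * τ) • x n.toNat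
      + Real.sin (Real.pi / 2 * τ) • x (n + 1).toNat) (fun n => by fun_prop)
    (fun n => by simp)

theorem map_interpolate {F E' R : Type*} [AddCommGroup E'] [Module ℝ E'] [Semiring R] [Module R E]
    [Module R E'] [FunLike F E E'] [LinearMapClass F R E E'] [LinearMap.CompatibleSMul E E' ℝ R]
    (f : F) (x : ℕ → E) (t : ℝ) : f (interpolate x t) = interpolate (fun n => f (x n)) t := by
  simp only [interpolate, map_add]
  rw [LinearMapClass.map_smul_of_tower f, LinearMapClass.map_smul_of_tower f]

theorem norm_interpolate_le {E : Type*} [SeminormedAddCommGroup E] [NormedSpace ℝ E]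
    (x : ℕ → E) (t : ℝ) :
    ‖interpolate x t‖ ≤ ‖x ⌊t⌋.toNat‖ + ‖x (⌊t⌋ + 1).toNat‖ := by
  refine (norm_add_le _ _).trans (add_le_add ?_ ?_) <;> rw [norm_smul]
  · exact mul_le_of_le_one_left (norm_nonneg _) (Real.abs_cos_le_one _)
  · exact mul_le_of_le_one_left (norm_nonneg _) (Real.abs_sin_le_one _)

theorem tendsto_floor_toNat_atTop : Tendsto (fun t : ℝ => ⌊t⌋.toNat) atTop atTop := by
  simpa only [Int.floor_toNat] using tendsto_nat_floor_atTop

theorem tendsto_floor_add_one_toNat_atTop : Tendsto (fun t : ℝ => (⌊t⌋ + 1).toNat) atTop atTop :=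
  tendsto_atTop_mono (fun t => by omega) tendsto_floor_toNat_atTop

theorem tendsto_interpolate {E : Type*} [SeminormedAddCommGroup E] [NormedSpace ℝ E]
    {x : ℕ → E} (hx : Tendsto x atTop (𝓝 0)) : Tendsto (interpolate x) atTop (𝓝 0) :=
  squeeze_zero_norm (norm_interpolate_le x) (by
    simpa using (hx.comp tendsto_floor_toNat_atTop).norm.add
      (hx.comp tendsto_floor_add_one_toNat_atTop).norm)

theorem tendsto_interpolate_prod {E ι : Type*} [SeminormedAddCommGroup E] [NormedSpace ℝ E]
    {l : Filter ι} {x : ℕ → ι → E}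
    (hx : Tendsto (fun p : ℕ × ι => x p.1 p.2) (atTop ×ˢ l) (𝓝 0)) :
    Tendsto (fun p : ℝ × ι => interpolate (x · p.2) p.1) (atTop ×ˢ l) (𝓝 0) :=
  squeeze_zero_norm (fun p => norm_interpolate_le _ _) (by
    simpa using (hx.comp (tendsto_floor_toNat_atTop.prodMap tendsto_id)).norm.add
      (hx.comp (tendsto_floor_add_one_toNat_atTop.prodMap tendsto_id)).norm)

section Algebra
variable {R : Type*} [Ring R] [Algebra ℝ R]

theorem interpolate_mul_sub_mul_interpolate (x y : ℕ → R) (p q : R) (t : ℝ) :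
    interpolate x t * p - q * interpolate y t = interpolate (fun n => x n * p - q * y n) t := by
  simp only [interpolate, add_mul, mul_add, smul_mul_assoc, mul_smul_comm, smul_sub]
  abel

theorem interpolate_mem (B : TwoSidedIdeal R) {x : ℕ → R} (hx : ∀ n, x n ∈ B) (t : ℝ) :
    interpolate x t ∈ B := by
  simp only [interpolate, ← smul_one_mul _ (x _)]
  exact B.add_mem (B.mul_mem_left _ _ (hx _)) (B.mul_mem_left _ _ (hx _))

theorem star_interpolate_mul_self [StarRing R] [StarModule ℝ R] {x : ℕ → R}
    (hx : ∀ n, star (x n) * x n = 1) (horth : ∀ n, star (x (n + 1)) * x n = 0) {t : ℝ}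
    (ht : 0 ≤ t) : star (interpolate x t) * interpolate x t = 1 := by
  have hsucc : (⌊t⌋ + 1).toNat = ⌊t⌋.toNat + 1 := by
    have := Int.floor_nonneg.mpr ht; omega
  have horth' : star (x ⌊t⌋.toNat) * x (⌊t⌋.toNat + 1) = 0 := by
    simpa using congrArg star (horth ⌊t⌋.toNat)
  simp only [interpolate, hsucc, star_add, star_smul, star_trivial, add_mul, mul_add,
    smul_mul_smul_comm, hx, horth, horth', smul_zero, add_zero, zero_add, ← add_smul]
  rw [← sq, ← sq, Real.cos_sq_add_sin_sq, one_smul]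

end Algebra

end Interpolation

theorem mul_star_sub_star_mul_eq_neg {R : Type*} [Ring R] [StarRing R] {p q S S' : R}
    (hp : p * star p = 1) (hq : star q * q = 1) :
    p * star S' - star S * q = -(p * star (S * p - q * S') * q) := by
  simp only [star_sub, star_mul, mul_sub, sub_mul, mul_assoc, mul_mul_eq_mul_of_mul_eq hp, hq]
  simp only [← mul_assoc, one_mul, mul_one, neg_sub]

theorem norm_mul_star_sub_star_mul_eq {M : Type*} [CStarAlgebra M] {p q S S' : M}
    (hp : p ∈ unitary M) (hq : q ∈ unitary M) :
    ‖p * star S' - star S * q‖ = ‖S * p - q * S'‖ := by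
  rw [mul_star_sub_star_mul_eq_neg (Unitary.mul_star_self_of_mem hp)
    (Unitary.star_mul_self_of_mem hq), norm_neg, CStarRing.norm_mul_mem_unitary _ hq,
    CStarRing.norm_mem_unitary_mul _ hp, norm_star]

section Absorption

variable {M : Type*} [CStarAlgebra M] {r₁ r₂ : M} {s : ℕ → M}

theorem IsCuntzPair.tendsto_norm_cuntzSum_sub_conj_interpolate {A : Type*}
    [NonUnitalNonAssocSemiring A] [Module ℂ A] [Star A] (hr : IsCuntzPair r₁ r₂) {ψ φ : A →⋆ₙₐ[ℂ] M}
    (hψ : ∀ a, Commute (ψ a) r₁ ∧ Commute (ψ a) r₂) (hs : ∀ n, star (s n) * s n = 1)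
    (he : ∀ n, star (s (n + 1)) * s n = 0)
    (ha : ∀ a, Tendsto (fun n => ‖s n * ψ a - φ a * s n‖) atTop (𝓝 0)) (a : A) :
    Tendsto (fun t => ‖(r₁ * ψ a * star r₁ + r₂ * φ a * star r₂)
      - absorptionUnitary r₁ r₂ (interpolate s t) * φ a
        * star (absorptionUnitary r₁ r₂ (interpolate s t))‖) atTop (𝓝 0) := by
  have hlim : ∀ b, Tendsto (fun t => ‖interpolate s t * ψ b - φ b * interpolate s t‖)
      atTop (𝓝 0) := fun b => by
    simp_rw [interpolate_mul_sub_mul_interpolate]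
    simpa using (tendsto_interpolate (tendsto_zero_iff_norm_tendsto_zero.mpr (ha b))).norm
  refine squeeze_zero' (Eventually.of_forall fun _ => norm_nonneg _) ?_
    (by simpa using ((hlim (star a)).const_mul 3).add ((hlim a).const_mul 2))
  filter_upwards [eventually_ge_atTop 0] with t ht
  have hS := star_interpolate_mul_self hs he ht
  refine (hr.norm_cuntzSum_sub_conj_absorptionUnitary_le (hψ a).1 (hψ a).2 hS hS).trans_eq ?_
  rw [← norm_star (interpolate s t * ψ (star a) - _)]
  simp [star_sub, star_mul, map_star]

theorem IsCuntzPair.cuntzSum_sub_conj_interpolate_mem {A : Type*} [NonUnitalNonAssocSemiring A]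
    [Module ℂ A] [Star A]
    (hr : IsCuntzPair r₁ r₂) {B : TwoSidedIdeal M} (hB : IsClosed (B : Set M))
    {ψ φ : A →⋆ₙₐ[ℂ] M} (hψ : ∀ a, Commute (ψ a) r₁ ∧ Commute (ψ a) r₂)
    (hs : ∀ n, star (s n) * s n = 1) (he : ∀ n, star (s (n + 1)) * s n = 0)
    (hb : ∀ a n, s n * ψ a - φ a * s n ∈ B) (a : A) {t : ℝ} (ht : 0 ≤ t) :
    (r₁ * ψ a * star r₁ + r₂ * φ a * star r₂)
      - absorptionUnitary r₁ r₂ (interpolate s t) * φ a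
        * star (absorptionUnitary r₁ r₂ (interpolate s t)) ∈ B := by
  have hD : ∀ b, interpolate s t * ψ b - φ b * interpolate s t ∈ B := fun b => by
    rw [interpolate_mul_sub_mul_interpolate]
    exact interpolate_mem B (hb b) t
  refine hr.cuntzSum_sub_conj_absorptionUnitary_mem B (hψ a).1 (hψ a).2
    (star_interpolate_mul_self hs he ht) (hD a) ?_
  convert B.star_mem_of_isClosed hB (hD (star a)) using 1
  simp [star_sub, star_mul, map_star]

variable {G : Type*} {β : G → M ≃⋆ₐ[ℂ] M} {u v : G → M}

theorem IsCuntzPair.tendstoUniformlyOn_cuntzSum_sub_conj_interpolate (hr : IsCuntzPair r₁ r₂)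
    (hβr₁ : ∀ g, β g r₁ = r₁) (hβr₂ : ∀ g, β g r₂ = r₂) (hu : ∀ g, u g ∈ unitary M)
    (hv : ∀ g, v g ∈ unitary M) (hvr : ∀ g, Commute (v g) r₁ ∧ Commute (v g) r₂)
    (hs : ∀ n, star (s n) * s n = 1) (he : ∀ n, star (s (n + 1)) * s n = 0) {K : Set G}
    (hc : TendstoUniformlyOn (fun n g => s n * v g - u g * β g (s n)) 0 atTop K) :
    TendstoUniformlyOn (fun t g => (r₁ * v g * star r₁ + r₂ * u g * star r₂)
      - absorptionUnitary r₁ r₂ (interpolate s t) * u g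
        * star (β g (absorptionUnitary r₁ r₂ (interpolate s t)))) 0 atTop K := by
  rw [tendstoUniformlyOn_zero_iff_tendsto] at hc ⊢
  have hlim := tendsto_interpolate_prod (x := fun n g => s n * v g - u g * β g (s n)) hc
  refine squeeze_zero_norm' ?_ (by simpa using hlim.norm.const_mul 5)
  filter_upwards [(eventually_ge_atTop 0).prod_inl _] with ⟨t, g⟩ (ht : 0 ≤ t)
  have hS := star_interpolate_mul_self hs he ht
  rw [map_absorptionUnitary, hβr₁, hβr₂]
  refine (hr.norm_cuntzSum_sub_conj_absorptionUnitary_le (hvr g).1 (hvr g).2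
    hS (star_map_mul_map_eq_one (β g) hS)).trans ?_
  rw [norm_mul_star_sub_star_mul_eq (hv g) (hu g), map_interpolate,
    interpolate_mul_sub_mul_interpolate]
  linarith

theorem IsCuntzPair.cocycle_cuntzSum_sub_conj_interpolate_mem (hr : IsCuntzPair r₁ r₂)
    {B : TwoSidedIdeal M} (hB : IsClosed (B : Set M)) (hβr₁ : ∀ g, β g r₁ = r₁)
    (hβr₂ : ∀ g, β g r₂ = r₂) (hu : ∀ g, u g ∈ unitary M) (hv : ∀ g, v g ∈ unitary M)
    (hvr : ∀ g, Commute (v g) r₁ ∧ Commute (v g) r₂) (hs : ∀ n, star (s n) * s n = 1)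
    (he : ∀ n, star (s (n + 1)) * s n = 0) (hd : ∀ n g, s n * v g - u g * β g (s n) ∈ B)
    {t : ℝ} (ht : 0 ≤ t) (g : G) :
    (r₁ * v g * star r₁ + r₂ * u g * star r₂)
      - absorptionUnitary r₁ r₂ (interpolate s t) * u g
        * star (β g (absorptionUnitary r₁ r₂ (interpolate s t))) ∈ B := by
  have hD : interpolate s t * v g - u g * β g (interpolate s t) ∈ B := by
    rw [map_interpolate, interpolate_mul_sub_mul_interpolate]
    exact interpolate_mem B (fun n => hd n g) t
  rw [map_absorptionUnitary, hβr₁, hβr₂]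
  refine hr.cuntzSum_sub_conj_absorptionUnitary_mem B (hvr g).1 (hvr g).2
    (star_map_mul_map_eq_one (β g) (star_interpolate_mul_self hs he ht)) hD ?_
  rw [mul_star_sub_star_mul_eq_neg (Unitary.mul_star_self_of_mem (hv g))
    (Unitary.star_mul_self_of_mem (hu g))]
  exact B.neg_mem (B.mul_mem_right _ _ (B.mul_mem_left _ _ (B.star_mem_of_isClosed hB hD)))

end Absorption

theorem stmt_6_general {G : Type*} [TopologicalSpace G]
    {A : Type*} [NonUnitalCStarAlgebra A]
    {M : Type*} [CStarAlgebra M]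
    (B : TwoSidedIdeal M) (hBclosed : IsClosed (B : Set M))
    (β : G → (M ≃⋆ₐ[ℂ] M))
    (φ : A →⋆ₙₐ[ℂ] M) (u : G → M)
    (hu : ∀ g, u g ∈ unitary M)
    (ψ : A →⋆ₙₐ[ℂ] M) (v : G → M)
    (hv : ∀ g, v g ∈ unitary M)
    (s : ℕ → M) (hs : ∀ n, star (s n) * s n = 1)
    (ha : ∀ a : A, Tendsto (fun n => ‖s n * ψ a - φ a * s n‖) atTop (𝓝 0))
    (hb : ∀ (a : A) (n : ℕ), s n * ψ a - φ a * s n ∈ B)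
    (hc : ∀ K : Set G, IsCompact K →
      TendstoUniformlyOn (fun n g => s n * v g - u g * β g (s n)) 0 atTop K)
    (hd : ∀ (n : ℕ) (g : G), s n * v g - u g * β g (s n) ∈ B)
    (he : ∀ n, star (s (n + 1)) * s n = 0)
    (r₁ r₂ : M) (hr₁ : star r₁ * r₁ = 1) (hr₂ : star r₂ * r₂ = 1)
    (hβr₁ : ∀ g, β g r₁ = r₁) (hβr₂ : ∀ g, β g r₂ = r₂)
    (hO₂ : r₁ * star r₁ + r₂ * star r₂ = 1)
    (hcomm₁ : ∀ a : A, r₁ * ψ a = ψ a * r₁ ∧ r₂ * ψ a = ψ a * r₂)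
    (hcomm₂ : ∀ g : G, r₁ * v g = v g * r₁ ∧ r₂ * v g = v g * r₂) :
    ∃ w : ℝ → M,
      ContinuousOn w (Set.Ici (1 : ℝ)) ∧
      (∀ t ∈ Set.Ici (1 : ℝ), w t ∈ unitary M) ∧
      (∀ a : A, Tendsto
        (fun t => ‖(r₁ * ψ a * star r₁ + r₂ * φ a * star r₂) - w t * φ a * star (w t)‖)
        atTop (𝓝 0)) ∧
      (∀ a : A, ∀ t ∈ Set.Ici (1 : ℝ),
        (r₁ * ψ a * star r₁ + r₂ * φ a * star r₂) - w t * φ a * star (w t) ∈ B) ∧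
      (∀ K : Set G, IsCompact K →
        TendstoUniformlyOn
          (fun t g => (r₁ * v g * star r₁ + r₂ * u g * star r₂) -
            w t * u g * star (β g (w t))) 0 atTop K) ∧
      (∀ t ∈ Set.Ici (1 : ℝ), ∀ g : G,
        (r₁ * v g * star r₁ + r₂ * u g * star r₂) - w t * u g * star (β g (w t)) ∈ B) := by
  have hr : IsCuntzPair r₁ r₂ := ⟨hr₁, hr₂, hO₂⟩
  have hS : ∀ t ∈ Set.Ici (1 : ℝ), star (interpolate s t) * interpolate s t = 1 := fun t ht =>
    star_interpolate_mul_self hs he (zero_le_one.trans ht)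
  have hψ : ∀ a, Commute (ψ a) r₁ ∧ Commute (ψ a) r₂ := fun a =>
    ⟨(hcomm₁ a).1.symm, (hcomm₁ a).2.symm⟩
  have hvr : ∀ g, Commute (v g) r₁ ∧ Commute (v g) r₂ := fun g =>
    ⟨(hcomm₂ g).1.symm, (hcomm₂ g).2.symm⟩
  have hcont := continuous_interpolate s
  refine ⟨fun t => absorptionUnitary r₁ r₂ (interpolate s t),
    Continuous.continuousOn (by simp only [absorptionUnitary]; fun_prop),
    fun t ht => hr.absorptionUnitary_mem_unitary (hS t ht),
    hr.tendsto_norm_cuntzSum_sub_conj_interpolate hψ hs he ha,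
    fun a t ht => hr.cuntzSum_sub_conj_interpolate_mem hBclosed hψ hs he hb a
      (zero_le_one.trans ht),
    fun K hK => hr.tendstoUniformlyOn_cuntzSum_sub_conj_interpolate hβr₁ hβr₂ hu hv hvr hs he
      (hc K hK),
    fun t ht => hr.cocycle_cuntzSum_sub_conj_interpolate_mem hBclosed hβr₁ hβr₂ hu hv hvr hs he
      hd (zero_le_one.trans ht)⟩

/-- **Lemma 3.10.** A sufficient criterion for absorption of cocycle
representations: if there is a sequence of isometries asymptotically
intertwining `(ψ, v)` and `(φ, u)` (exactly, modulo the ideal `B`), with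
orthogonal consecutive ranges, and a `β`-fixed unital copy of `O₂` commuting
with the range of `(ψ, v)`, then `(φ, u) ≍ (ψ, v) ⊕ (φ, u)`. -/
theorem stmt_6 {G : Type*} [Group G] [TopologicalSpace G] [IsTopologicalGroup G]
    {A : Type*} [NonUnitalCStarAlgebra A]
    {M : Type*} [CStarAlgebra M]
    (B : TwoSidedIdeal M) (hBclosed : IsClosed (B : Set M))
    (α : G → (A ≃⋆ₐ[ℂ] A)) (hα : ∀ g h a, α (g * h) a = α g (α h a))
    (β : G → (M ≃⋆ₐ[ℂ] M)) (hβ : ∀ g h x, β (g * h) x = β g (β h x))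
    (hβB : ∀ g, ∀ b ∈ B, β g b ∈ B)
    (φ : A →⋆ₙₐ[ℂ] M) (u : G → M)
    (hu : ∀ g, u g ∈ unitary M)
    (hucoc : ∀ g h, u (g * h) = u g * β g (u h))
    (hucov : ∀ g a, u g * β g (φ a) * star (u g) = φ (α g a))
    (ψ : A →⋆ₙₐ[ℂ] M) (v : G → M)
    (hv : ∀ g, v g ∈ unitary M)
    (hvcoc : ∀ g h, v (g * h) = v g * β g (v h))
    (hvcov : ∀ g a, v g * β g (ψ a) * star (v g) = ψ (α g a))
    (s : ℕ → M) (hs : ∀ n, star (s n) * s n = 1)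
    (ha : ∀ a : A, Tendsto (fun n => ‖s n * ψ a - φ a * s n‖) atTop (𝓝 0))
    (hb : ∀ (a : A) (n : ℕ), s n * ψ a - φ a * s n ∈ B)
    (hc : ∀ K : Set G, IsCompact K →
      TendstoUniformlyOn (fun n g => s n * v g - u g * β g (s n)) 0 atTop K)
    (hd : ∀ (n : ℕ) (g : G), s n * v g - u g * β g (s n) ∈ B)
    (he : ∀ n, star (s (n + 1)) * s n = 0)
    (r₁ r₂ : M) (hr₁ : star r₁ * r₁ = 1) (hr₂ : star r₂ * r₂ = 1)
    (hβr₁ : ∀ g, β g r₁ = r₁) (hβr₂ : ∀ g, β g r₂ = r₂)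
    (hO₂ : r₁ * star r₁ + r₂ * star r₂ = 1)
    (hcomm₁ : ∀ a : A, r₁ * ψ a = ψ a * r₁ ∧ r₂ * ψ a = ψ a * r₂)
    (hcomm₂ : ∀ g : G, r₁ * v g = v g * r₁ ∧ r₂ * v g = v g * r₂) :
    ∃ w : ℝ → M,
      ContinuousOn w (Set.Ici (1 : ℝ)) ∧
      (∀ t ∈ Set.Ici (1 : ℝ), w t ∈ unitary M) ∧
      (∀ a : A, Tendsto
        (fun t => ‖(r₁ * ψ a * star r₁ + r₂ * φ a * star r₂) - w t * φ a * star (w t)‖)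
        atTop (𝓝 0)) ∧
      (∀ a : A, ∀ t ∈ Set.Ici (1 : ℝ),
        (r₁ * ψ a * star r₁ + r₂ * φ a * star r₂) - w t * φ a * star (w t) ∈ B) ∧
      (∀ K : Set G, IsCompact K →
        TendstoUniformlyOn
          (fun t g => (r₁ * v g * star r₁ + r₂ * u g * star r₂) -
            w t * u g * star (β g (w t))) 0 atTop K) ∧
      (∀ t ∈ Set.Ici (1 : ℝ), ∀ g : G,
        (r₁ * v g * star r₁ + r₂ * u g * star r₂) - w t * u g * star (β g (w t)) ∈ B) :=
  stmt_6_general B hBclosed β φ u hu ψ v hv s hs ha hb hc hd he r₁ r₂ hr₁ hr₂ hβr₁ hβr₂ hO₂ hcomm₁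
    hcomm₂
end

section
/- Let G be a topological group, A a C*-algebra with a group homomorphism α : G → Aut(A) into *-automorphisms, M a unital C*-algebra, B ⊆ M a closed two-sided ideal, and β : G → Aut(M) a group homomorphism into *-automorphisms with β_g(B) ⊆ B for all g. Let t₁, t₂ ∈ M be isometries with β_g(t₁) = t₁ and β_g(t₂) = t₂ for all g ∈ G and t₁t₁* + t₂t₂* = 1, and form all Cuntz sums x ⊕ y := t₁xt₁* + t₂yt₂* with respect to t₁, t₂ (pointwise for maps). Let (φ, u), (ψ, v), (ρ, w), (θ, x) be four cocycle representations of (A, α) in (M, β). Suppose: (a) (φ⊕ρ, u⊕w) and (ψ⊕ρ, v⊕w) are strongly asymptotically unitarily equivalent, i.e. there is a norm-continuous path p : [0,∞) → U(M) with p₀ = 1, p_t − 1 ∈ B for all t, lim_{t→∞} ‖(ψ⊕ρ)(a) − p_t·(φ⊕ρ)(a)·p_t*‖ = 0 for all a ∈ A, and lim_{t→∞} sup_{g∈K} ‖(v⊕w)_g − p_t·(u⊕w)_g·β_g(p_t)*‖ = 0 for all compact K ⊆ G; and (b) (ρ, w) ≍ (θ, x), i.e. there is a norm-continuous path q : [0,∞)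 → U(M) with lim_{t→∞} ‖θ(a) − q_t·ρ(a)·q_t*‖ = 0 and θ(a) − q_t·ρ(a)·q_t* ∈ B for all a ∈ A and t, and lim_{t→∞} sup_{g∈K} ‖x_g − q_t·w_g·β_g(q_t)*‖ = 0 for all compact K ⊆ G with x_g − q_t·w_g·β_g(q_t)* ∈ B for all t, g. Then (φ⊕θ, u⊕x) and (ψ⊕θ, v⊕x) are strongly asymptotically unitarily equivalent: there is a norm-continuous path r : [0,∞) → U(M) with r₀ = 1, r_t − 1 ∈ B for all t, lim_{t→∞} ‖(ψ⊕θ)(a) − r_t·(φ⊕θ)(a)·r_t*‖ = 0 for all a ∈ A, and lim_{t→∞} sup_{g∈K} ‖(v⊕x)_g − r_t·(u⊕x)_g·β_g(r_t)*‖ = 0 for every compact K ⊆ G. -/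
/-!
Take `r t = (1 ⊕ q t) * p t * star (1 ⊕ q t)`. As `1 ⊕ q t` is unitary, `r t - 1` is a conjugate
of `p t - 1`, so it lies in `B`, and `r 0 = 1`. Conjugation by `1 ⊕ q t` turns `c ⊕ ρ a` into
`c ⊕ q t * ρ a * star (q t)`, which differs from `c ⊕ θ a` only in the second summand; comparing
once on each side of `p t`, the distance from `ψ ⊕ θ` to `r t (φ ⊕ θ) star (r t)` is at most the
distance in (a) plus twice `‖θ a - q t * ρ a * star (q t)‖`. The cocycles obey the same estimate
with `β g (q t)` on the right, because `β g` fixes `t₁` and `t₂`.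
-/

open Filter Topology

section CStarRing

variable {E : Type*} [NormedRing E] [StarRing E] [CStarRing E] {s : E}

theorem norm_isometry_mul (hs : star s * s = 1) (z : E) : ‖s * z‖ = ‖z‖ := by
  rw [← sq_eq_sq₀ (norm_nonneg _) (norm_nonneg _), sq, sq, ← CStarRing.norm_star_mul_self,
    ← CStarRing.norm_star_mul_self, star_mul, mul_assoc, ← mul_assoc (star s), hs, one_mul]

theorem norm_isometry_mul_mul_star (hs : star s * s = 1) (z : E) : ‖s * z * star s‖ = ‖z‖ := by
  rw [mul_assoc, norm_isometry_mul hs, ← norm_star, star_mul, star_star, norm_isometry_mul hs,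
    norm_star]

theorem norm_sub_conj_conj_le {Q Q' P P' : E} (hQ : Q ∈ unitary E) (hQ' : Q' ∈ unitary E)
    (hP : P ∈ unitary E) (hP' : P' ∈ unitary E) (T T' X X' : E) :
    ‖T - Q * P * star Q * X * star (Q' * P' * star Q')‖ ≤
      ‖T - Q * T' * star Q'‖ + ‖T' - P * X' * star P'‖ + ‖Q * X' * star Q' - X‖ := by
  have hR : Q * P * star Q ∈ unitary E := mul_mem (mul_mem hQ hP) (Unitary.star_mem hQ)
  have hR' : star (Q' * P' * star Q') ∈ unitary E :=
    Unitary.star_mem (mul_mem (mul_mem hQ' hP') (Unitary.star_mem hQ'))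
  have hconj : Q * P * star Q * (Q * X' * star Q') * star (Q' * P' * star Q') =
      Q * (P * X' * star P') * star Q' := by
    simp only [star_mul, star_star, mul_assoc, Unitary.star_mul_self_of_mem hQ,
      Unitary.star_mul_self_of_mem hQ', ← mul_assoc (star Q) Q, ← mul_assoc (star Q') Q', one_mul]
  have hmiddle : ‖Q * T' * star Q' - Q * (P * X' * star P') * star Q'‖ =
      ‖T' - P * X' * star P'‖ := by
    rw [← sub_mul, ← mul_sub, CStarRing.norm_mul_mem_unitary _ (Unitary.star_mem hQ'),
      CStarRing.norm_mem_unitary_mul _ hQ]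
  have hlast : ‖Q * P * star Q * (Q * X' * star Q') * star (Q' * P' * star Q') -
      Q * P * star Q * X * star (Q' * P' * star Q')‖ = ‖Q * X' * star Q' - X‖ := by
    rw [← sub_mul, ← mul_sub, CStarRing.norm_mul_mem_unitary _ hR',
      CStarRing.norm_mem_unitary_mul _ hR]
  rw [hconj] at hlast
  linarith [norm_sub_le_norm_sub_add_norm_sub T (Q * T' * star Q')
      (Q * (P * X' * star P') * star Q'),
    norm_sub_le_norm_sub_add_norm_sub T (Q * (P * X' * star P') * star Q')
      (Q * P * star Q * X * star (Q' * P' * star Q'))]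

end CStarRing

theorem TwoSidedIdeal.mul_mul_star_sub_one_mem {R : Type*} [Ring R] [StarRing R]
    (I : TwoSidedIdeal R) {U P : R} (hU : U ∈ unitary R) (hP : P - 1 ∈ I) :
    U * P * star U - 1 ∈ I := by
  have h : U * P * star U - 1 = U * (P - 1) * star U := by
    rw [mul_sub, sub_mul, mul_one, Unitary.mul_star_self_of_mem hU]
  exact h ▸ I.mul_mem_right _ _ (I.mul_mem_left _ _ hP)

theorem TendstoUniformlyOn.of_norm_le_add_two_mul {ι α E F E' : Type*}
    [SeminormedAddCommGroup E] [SeminormedAddCommGroup F] [SeminormedAddCommGroup E']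
    {l : Filter ι} {s : Set α} {f : ι → α → E} {g : ι → α → F} {h : ι → α → E'}
    (hf : TendstoUniformlyOn f 0 l s) (hg : TendstoUniformlyOn g 0 l s)
    (hh : ∀ᶠ i in l, ∀ x ∈ s, ‖h i x‖ ≤ ‖f i x‖ + 2 * ‖g i x‖) :
    TendstoUniformlyOn h 0 l s := by
  rw [Metric.tendstoUniformlyOn_iff] at hf hg ⊢
  intro ε hε
  filter_upwards [hf (ε / 4) (by positivity), hg (ε / 4) (by positivity), hh]
    with i hfi hgi hhi x hx
  have hfx := hfi x hx
  have hgx := hgi x hx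
  simp only [Pi.zero_apply, dist_zero_left] at hfx hgx ⊢
  linarith [hhi x hx]

/-- The paper's `a ⊕ b`. -/
def cuntzSum {R : Type*} [Mul R] [Add R] [Star R] (t₁ t₂ a b : R) : R :=
  t₁ * a * star t₁ + t₂ * b * star t₂

section Algebra

variable {R : Type*} [Ring R] [StarRing R] {t₁ t₂ : R}

theorem star_cuntzSum (a b : R) :
    star (cuntzSum t₁ t₂ a b) = cuntzSum t₁ t₂ (star a) (star b) := by
  simp only [cuntzSum, star_add, star_mul, star_star, mul_assoc]

theorem cuntzSum_sub_cuntzSum (a a' b b' : R) :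
    cuntzSum t₁ t₂ a b - cuntzSum t₁ t₂ a' b' = cuntzSum t₁ t₂ (a - a') (b - b') := by
  simp only [cuntzSum]; noncomm_ring

theorem cuntzSum_zero_left (b : R) : cuntzSum t₁ t₂ 0 b = t₂ * b * star t₂ := by
  simp only [cuntzSum, mul_zero, zero_mul, zero_add]

theorem map_cuntzSum {S : Type*} [FunLike S R R] [NonUnitalRingHomClass S R R]
    [StarHomClass S R R] (f : S) (h₁ : f t₁ = t₁) (h₂ : f t₂ = t₂) (a b : R) :
    f (cuntzSum t₁ t₂ a b) = cuntzSum t₁ t₂ (f a) (f b) := by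
  simp only [cuntzSum, map_add, map_mul, map_star, h₁, h₂]

variable (ht₁ : star t₁ * t₁ = 1) (ht₂ : star t₂ * t₂ = 1)
  (hO₂ : t₁ * star t₁ + t₂ * star t₂ = 1)
include ht₁ ht₂ hO₂

theorem star_mul_eq_zero_of_mul_star_add_mul_star_eq_one : star t₁ * t₂ = 0 := by
  have h : star t₁ * (t₁ * star t₁ + t₂ * star t₂) * t₂ = star t₁ * t₂ + star t₁ * t₂ := by
    rw [mul_add, add_mul, ← mul_assoc, ht₁, one_mul, mul_assoc, mul_assoc, ht₂, mul_one]
  rw [hO₂, mul_one] at h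
  exact left_eq_add.mp h

theorem cuntzSum_mul_cuntzSum (a b c d : R) :
    cuntzSum t₁ t₂ a b * cuntzSum t₁ t₂ c d = cuntzSum t₁ t₂ (a * c) (b * d) := by
  have h₁₂ : star t₁ * t₂ = 0 := star_mul_eq_zero_of_mul_star_add_mul_star_eq_one ht₁ ht₂ hO₂
  have h₂₁ : star t₂ * t₁ = 0 := by simpa using congrArg star h₁₂
  simp only [cuntzSum, mul_add, add_mul, mul_assoc]
  simp only [← mul_assoc (star t₁), ← mul_assoc (star t₂), ht₁, ht₂, h₁₂, h₂₁, zero_mul,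
    mul_zero, one_mul, add_zero, zero_add]

theorem cuntzSum_mem_unitary {a b : R} (ha : a ∈ unitary R) (hb : b ∈ unitary R) :
    cuntzSum t₁ t₂ a b ∈ unitary R := by
  rw [Unitary.mem_iff, star_cuntzSum, cuntzSum_mul_cuntzSum ht₁ ht₂ hO₂,
    cuntzSum_mul_cuntzSum ht₁ ht₂ hO₂]
  simp only [Unitary.star_mul_self_of_mem ha, Unitary.star_mul_self_of_mem hb,
    Unitary.mul_star_self_of_mem ha, Unitary.mul_star_self_of_mem hb, cuntzSum, mul_one, hO₂,
    and_self]

theorem cuntzSum_one_conj (k k' c d : R) :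
    cuntzSum t₁ t₂ 1 k * cuntzSum t₁ t₂ c d * star (cuntzSum t₁ t₂ 1 k') =
      cuntzSum t₁ t₂ c (k * d * star k') := by
  rw [star_cuntzSum, star_one, cuntzSum_mul_cuntzSum ht₁ ht₂ hO₂,
    cuntzSum_mul_cuntzSum ht₁ ht₂ hO₂, one_mul, mul_one]

end Algebra

section Norm

variable {E : Type*} [NormedRing E] [StarRing E] [CStarRing E] {t₁ t₂ : E}
  (ht₁ : star t₁ * t₁ = 1) (ht₂ : star t₂ * t₂ = 1) (hO₂ : t₁ * star t₁ + t₂ * star t₂ = 1)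
include ht₁ ht₂ hO₂

theorem norm_cuntzSum_sub_conj_le {k k' P P' : E} (hk : k ∈ unitary E) (hk' : k' ∈ unitary E)
    (hP : P ∈ unitary E) (hP' : P' ∈ unitary E) (c c' d d' : E) :
    ‖cuntzSum t₁ t₂ c' d - cuntzSum t₁ t₂ 1 k * P * star (cuntzSum t₁ t₂ 1 k) *
        cuntzSum t₁ t₂ c d * star (cuntzSum t₁ t₂ 1 k' * P' * star (cuntzSum t₁ t₂ 1 k'))‖ ≤
      ‖cuntzSum t₁ t₂ c' d' - P * cuntzSum t₁ t₂ c d' * star P'‖ + 2 * ‖d - k * d' * star k'‖ := by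
  have hQ := cuntzSum_mem_unitary ht₁ ht₂ hO₂ (one_mem _) hk
  have hQ' := cuntzSum_mem_unitary ht₁ ht₂ hO₂ (one_mem _) hk'
  refine (norm_sub_conj_conj_le hQ hQ' hP hP' _ (cuntzSum t₁ t₂ c' d') _
    (cuntzSum t₁ t₂ c d')).trans_eq ?_
  rw [cuntzSum_one_conj ht₁ ht₂ hO₂, cuntzSum_one_conj ht₁ ht₂ hO₂, cuntzSum_sub_cuntzSum,
    cuntzSum_sub_cuntzSum, sub_self, sub_self, cuntzSum_zero_left, cuntzSum_zero_left,
    norm_isometry_mul_mul_star ht₂, norm_isometry_mul_mul_star ht₂, norm_sub_rev (k * d' * _)]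
  ring

end Norm

theorem stmt_12_general {G : Type*} [TopologicalSpace G]
    {A : Type*} [NonUnitalCStarAlgebra A]
    {M : Type*} [CStarAlgebra M]
    (B : TwoSidedIdeal M)
    (β : G → (M ≃⋆ₐ[ℂ] M))
    (t₁ t₂ : M) (ht₁ : star t₁ * t₁ = 1) (ht₂ : star t₂ * t₂ = 1)
    (hβt₁ : ∀ g, β g t₁ = t₁) (hβt₂ : ∀ g, β g t₂ = t₂)
    (hO₂ : t₁ * star t₁ + t₂ * star t₂ = 1)
    -- the four cocycle representations
    (φ : A →⋆ₙₐ[ℂ] M) (u : G → M)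
    (ψ : A →⋆ₙₐ[ℂ] M) (v : G → M)
    (ρ : A →⋆ₙₐ[ℂ] M) (w : G → M)
    (θ : A →⋆ₙₐ[ℂ] M) (x : G → M)
    -- (a) strong asymptotic unitary equivalence of (φ⊕ρ, u⊕w) and (ψ⊕ρ, v⊕w)
    (p : ℝ → M)
    (hpcont : ContinuousOn p (Set.Ici (0 : ℝ)))
    (hp0 : p 0 = 1)
    (hpunit : ∀ t ∈ Set.Ici (0 : ℝ), p t ∈ unitary M)
    (hpB : ∀ t ∈ Set.Ici (0 : ℝ), p t - 1 ∈ B)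
    (hpφ : ∀ a : A, Tendsto (fun t =>
      ‖(t₁ * ψ a * star t₁ + t₂ * ρ a * star t₂) -
        p t * (t₁ * φ a * star t₁ + t₂ * ρ a * star t₂) * star (p t)‖) atTop (𝓝 0))
    (hpu : ∀ K : Set G, IsCompact K →
      TendstoUniformlyOn (fun t g =>
        (t₁ * v g * star t₁ + t₂ * w g * star t₂) -
          p t * (t₁ * u g * star t₁ + t₂ * w g * star t₂) * star (β g (p t)))
        0 atTop K)
    -- (b) (ρ, w) ≍ (θ, x)
    (q : ℝ → M)
    (hqcont : ContinuousOn q (Set.Ici (0 : ℝ)))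
    (hqunit : ∀ t ∈ Set.Ici (0 : ℝ), q t ∈ unitary M)
    (hqφ : ∀ a : A, Tendsto (fun t => ‖θ a - q t * ρ a * star (q t)‖) atTop (𝓝 0))
    (hqu : ∀ K : Set G, IsCompact K →
      TendstoUniformlyOn (fun t g => x g - q t * w g * star (β g (q t))) 0 atTop K) :
    ∃ r : ℝ → M,
      ContinuousOn r (Set.Ici (0 : ℝ)) ∧
      r 0 = 1 ∧
      (∀ t ∈ Set.Ici (0 : ℝ), r t ∈ unitary M ∧ r t - 1 ∈ B) ∧
      (∀ a : A, Tendsto (fun t =>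
        ‖(t₁ * ψ a * star t₁ + t₂ * θ a * star t₂) -
          r t * (t₁ * φ a * star t₁ + t₂ * θ a * star t₂) * star (r t)‖) atTop (𝓝 0)) ∧
      (∀ K : Set G, IsCompact K →
        TendstoUniformlyOn (fun t g =>
          (t₁ * v g * star t₁ + t₂ * x g * star t₂) -
            r t * (t₁ * u g * star t₁ + t₂ * x g * star t₂) * star (β g (r t)))
          0 atTop K) := by
  have hQ (t : ℝ) (ht : t ∈ Set.Ici 0) : cuntzSum t₁ t₂ 1 (q t) ∈ unitary M :=
    cuntzSum_mem_unitary ht₁ ht₂ hO₂ (one_mem _) (hqunit t ht)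
  have hβr (g : G) (t : ℝ) : β g (cuntzSum t₁ t₂ 1 (q t) * p t * star (cuntzSum t₁ t₂ 1 (q t))) =
      cuntzSum t₁ t₂ 1 (β g (q t)) * β g (p t) * star (cuntzSum t₁ t₂ 1 (β g (q t))) := by
    rw [map_mul, map_mul, map_star, map_cuntzSum (β g) (hβt₁ g) (hβt₂ g), map_one]
  refine ⟨fun t => cuntzSum t₁ t₂ 1 (q t) * p t * star (cuntzSum t₁ t₂ 1 (q t)), ?_, ?_,
    fun t ht => ⟨?_, ?_⟩, fun a => ?_, fun K hK => ?_⟩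
  · unfold cuntzSum
    fun_prop
  · simp only [hp0, mul_one]
    exact Unitary.mul_star_self_of_mem (hQ 0 Set.self_mem_Ici)
  · exact mul_mem (mul_mem (hQ t ht) (hpunit t ht)) (Unitary.star_mem (hQ t ht))
  · exact B.mul_mul_star_sub_one_mem (hQ t ht) (hpB t ht)
  · refine squeeze_zero' (Eventually.of_forall fun _ => norm_nonneg _) ?_
      (by simpa using (hpφ a).add ((hqφ a).const_mul 2))
    filter_upwards [eventually_ge_atTop 0] with t ht
    exact norm_cuntzSum_sub_conj_le ht₁ ht₂ hO₂ (hqunit t ht) (hqunit t ht) (hpunit t ht)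
      (hpunit t ht) ..
  · refine (hpu K hK).of_norm_le_add_two_mul (hqu K hK) ?_
    filter_upwards [eventually_ge_atTop 0] with t ht g _
    rw [hβr]
    exact norm_cuntzSum_sub_conj_le ht₁ ht₂ hO₂ (hqunit t ht) (Unitary.map_mem (β g) (hqunit t ht))
      (hpunit t ht) (Unitary.map_mem (β g) (hpunit t ht)) ..

/-- **Lemma 5.3.** If `(φ ⊕ ρ, u ⊕ w)` is strongly asymptotically unitarily
equivalent to `(ψ ⊕ ρ, v ⊕ w)` and `(ρ, w) ≍ (θ, x)`, then `(φ ⊕ θ, u ⊕ x)` is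
strongly asymptotically unitarily equivalent to `(ψ ⊕ θ, v ⊕ x)`, where all
Cuntz sums are formed with the `β`-fixed isometries `t₁, t₂`. -/
theorem stmt_12 {G : Type*} [Group G] [TopologicalSpace G] [IsTopologicalGroup G]
    {A : Type*} [NonUnitalCStarAlgebra A]
    {M : Type*} [CStarAlgebra M]
    (B : TwoSidedIdeal M) (hBclosed : IsClosed (B : Set M))
    (α : G → (A ≃⋆ₐ[ℂ] A)) (hα : ∀ g h a, α (g * h) a = α g (α h a))
    (β : G → (M ≃⋆ₐ[ℂ] M)) (hβ : ∀ g h y, β (g * h) y = β g (β h y))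
    (hβB : ∀ g, ∀ b ∈ B, β g b ∈ B)
    (t₁ t₂ : M) (ht₁ : star t₁ * t₁ = 1) (ht₂ : star t₂ * t₂ = 1)
    (hβt₁ : ∀ g, β g t₁ = t₁) (hβt₂ : ∀ g, β g t₂ = t₂)
    (hO₂ : t₁ * star t₁ + t₂ * star t₂ = 1)
    -- the four cocycle representations
    (φ : A →⋆ₙₐ[ℂ] M) (u : G → M)
    (hu : ∀ g, u g ∈ unitary M)
    (hucoc : ∀ g h, u (g * h) = u g * β g (u h))
    (hucov : ∀ g a, u g * β g (φ a) * star (u g) = φ (α g a))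
    (ψ : A →⋆ₙₐ[ℂ] M) (v : G → M)
    (hv : ∀ g, v g ∈ unitary M)
    (hvcoc : ∀ g h, v (g * h) = v g * β g (v h))
    (hvcov : ∀ g a, v g * β g (ψ a) * star (v g) = ψ (α g a))
    (ρ : A →⋆ₙₐ[ℂ] M) (w : G → M)
    (hw : ∀ g, w g ∈ unitary M)
    (hwcoc : ∀ g h, w (g * h) = w g * β g (w h))
    (hwcov : ∀ g a, w g * β g (ρ a) * star (w g) = ρ (α g a))
    (θ : A →⋆ₙₐ[ℂ] M) (x : G → M)
    (hx : ∀ g, x g ∈ unitary M)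
    (hxcoc : ∀ g h, x (g * h) = x g * β g (x h))
    (hxcov : ∀ g a, x g * β g (θ a) * star (x g) = θ (α g a))
    -- (a) strong asymptotic unitary equivalence of (φ⊕ρ, u⊕w) and (ψ⊕ρ, v⊕w)
    (p : ℝ → M)
    (hpcont : ContinuousOn p (Set.Ici (0 : ℝ)))
    (hp0 : p 0 = 1)
    (hpunit : ∀ t ∈ Set.Ici (0 : ℝ), p t ∈ unitary M)
    (hpB : ∀ t ∈ Set.Ici (0 : ℝ), p t - 1 ∈ B)
    (hpφ : ∀ a : A, Tendsto (fun t =>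
      ‖(t₁ * ψ a * star t₁ + t₂ * ρ a * star t₂) -
        p t * (t₁ * φ a * star t₁ + t₂ * ρ a * star t₂) * star (p t)‖) atTop (𝓝 0))
    (hpu : ∀ K : Set G, IsCompact K →
      TendstoUniformlyOn (fun t g =>
        (t₁ * v g * star t₁ + t₂ * w g * star t₂) -
          p t * (t₁ * u g * star t₁ + t₂ * w g * star t₂) * star (β g (p t)))
        0 atTop K)
    -- (b) (ρ, w) ≍ (θ, x)
    (q : ℝ → M)
    (hqcont : ContinuousOn q (Set.Ici (0 : ℝ)))
    (hqunit : ∀ t ∈ Set.Ici (0 : ℝ), q t ∈ unitary M)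
    (hqφ : ∀ a : A, Tendsto (fun t => ‖θ a - q t * ρ a * star (q t)‖) atTop (𝓝 0))
    (hqφB : ∀ a : A, ∀ t ∈ Set.Ici (0 : ℝ), θ a - q t * ρ a * star (q t) ∈ B)
    (hqu : ∀ K : Set G, IsCompact K →
      TendstoUniformlyOn (fun t g => x g - q t * w g * star (β g (q t))) 0 atTop K)
    (hquB : ∀ t ∈ Set.Ici (0 : ℝ), ∀ g : G, x g - q t * w g * star (β g (q t)) ∈ B) :
    ∃ r : ℝ → M,
      ContinuousOn r (Set.Ici (0 : ℝ)) ∧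
      r 0 = 1 ∧
      (∀ t ∈ Set.Ici (0 : ℝ), r t ∈ unitary M ∧ r t - 1 ∈ B) ∧
      (∀ a : A, Tendsto (fun t =>
        ‖(t₁ * ψ a * star t₁ + t₂ * θ a * star t₂) -
          r t * (t₁ * φ a * star t₁ + t₂ * θ a * star t₂) * star (r t)‖) atTop (𝓝 0)) ∧
      (∀ K : Set G, IsCompact K →
        TendstoUniformlyOn (fun t g =>
          (t₁ * v g * star t₁ + t₂ * x g * star t₂) -
            r t * (t₁ * u g * star t₁ + t₂ * x g * star t₂) * star (β g (r t)))
          0 atTop K) :=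
  stmt_12_general B β t₁ t₂ ht₁ ht₂ hβt₁ hβt₂ hO₂ φ u ψ v ρ w θ x p hpcont hp0 hpunit hpB hpφ hpu q
    hqcont hqunit hqφ hqu
end
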